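/- arXiv:2505.02552 — 2 statements merged into one kernel-verified Lean document; each statement's English description precedes it below -/
import Mathlib

section
/- Let (P,≤,',0,1) be a complemented poset. Then for all x,y ∈ P: (x + 1) + 1 = {x} (the outer + being the symmetric difference of the subset x + 1 and the singleton {1}), x + y = x' + y', and x + y' = x' + y. -/
/-- Lower bounds of a set in a preorder. -/
def LB {P : Type*} [Preorder P] (A : Set P) : Set P := {x | ∀ a ∈ A, x ≤ a}

/-- Upper bounds of a set in a preorder. -/
def UB {P : Type*} [Preorder P] (A : Set P) : Set P := {x | ∀ a ∈ A, a ≤ x}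

/-- The set of maximal elements of a set. -/
def MaxS {P : Type*} [Preorder P] (A : Set P) : Set P :=
  {x | x ∈ A ∧ ∀ y ∈ A, x ≤ y → y = x}

/-- The set of minimal elements of a set. -/
def MinS {P : Type*} [Preorder P] (A : Set P) : Set P :=
  {x | x ∈ A ∧ ∀ y ∈ A, y ≤ x → y = x}

/-- The symmetric difference A + B := Min U(Max L(A' ∪ B) ∪ Max L(A ∪ B')) in a
poset with a complementation map c. -/
def symdiff {P : Type*} [Preorder P] (c : P → P) (A B : Set P) : Set P :=
  MinS (UB (MaxS (LB ((c '' A) ∪ B)) ∪ MaxS (LB (A ∪ (c '' B)))))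

/-! Since `⊤' = ⊥`, the set `x + ⊤` collapses to the singleton `{x'}`: the lower bounds of
`{x', ⊤}` form the principal ideal of `x'`, those of `{x, ⊥}` are just `{⊥}`, so the upper bounds
of `{x', ⊥}` form the principal filter of `x'`. Hence `(x + ⊤) + ⊤ = {x''} = {x}`. The other two
identities hold because `x + y` is invariant under complementing both arguments, which only swaps
the two lower-bound sets in its definition. -/

section Bounds

variable {P : Type*} [PartialOrder P]

lemma maxS_Iic (a : P) : MaxS (Set.Iic a) = {a} := by
  ext x
  simp only [MaxS, Set.mem_ofPred_eq, Set.mem_Iic, Set.mem_singleton_iff]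
  constructor
  · rintro ⟨hxa, hmax⟩
    exact (hmax a le_rfl hxa).symm
  · rintro rfl
    exact ⟨le_rfl, fun y hy hxy => le_antisymm hy hxy⟩

lemma minS_Ici (a : P) : MinS (Set.Ici a) = {a} := by
  ext x
  simp only [MinS, Set.mem_ofPred_eq, Set.mem_Ici, Set.mem_singleton_iff]
  constructor
  · rintro ⟨hax, hmin⟩
    exact (hmin a le_rfl hax).symm
  · rintro rfl
    exact ⟨le_rfl, fun y hy hyx => le_antisymm hyx hy⟩

lemma maxS_singleton (a : P) : MaxS ({a} : Set P) = {a} := by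
  ext x
  simp only [MaxS, Set.mem_ofPred_eq, Set.mem_singleton_iff]
  constructor
  · exact And.left
  · rintro rfl
    exact ⟨rfl, fun y hy _ => hy⟩

variable [BoundedOrder P]

lemma lb_pair_top (a : P) : LB ({a, ⊤} : Set P) = Set.Iic a := by
  ext z
  simp [LB]

lemma lb_pair_bot (a : P) : LB ({a, ⊥} : Set P) = {⊥} := by
  ext z
  simp only [LB, Set.mem_insert_iff, Set.mem_singleton_iff, forall_eq_or_imp, forall_eq,
    le_bot_iff, Set.mem_ofPred_eq, and_iff_right_iff_imp]
  rintro rfl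
  exact bot_le

lemma ub_singleton_union_bot (a : P) : UB ({a} ∪ {⊥} : Set P) = Set.Ici a := by
  ext z
  simp [UB]

end Bounds

lemma symdiff_singleton {P : Type*} [Preorder P] (c : P → P) (a b : P) :
    symdiff c {a} {b} = MinS (UB (MaxS (LB {c a, b}) ∪ MaxS (LB {a, c b}))) := by
  rw [symdiff, Set.image_singleton, Set.image_singleton, Set.singleton_union,
    Set.singleton_union]

lemma symdiff_singleton_compl_compl {P : Type*} [Preorder P] {c : P → P}
    (hinv : ∀ x, c (c x) = x) (a b : P) :
    symdiff c {c a} {c b} = symdiff c {a} {b} := by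
  rw [symdiff_singleton, symdiff_singleton, hinv, hinv, Set.union_comm]

lemma symdiff_singleton_top {P : Type*} [PartialOrder P] [BoundedOrder P] {c : P → P}
    (hctop : c ⊤ = ⊥) (a : P) : symdiff c {a} {⊤} = {c a} := by
  rw [symdiff_singleton, hctop, lb_pair_top, lb_pair_bot, maxS_Iic, maxS_singleton,
    ub_singleton_union_bot, minS_Ici]

lemma compl_top_of_lb_pair {P : Type*} [PartialOrder P] [BoundedOrder P] {c : P → P}
    (hcompL : ∀ x, LB {x, c x} = {(⊥ : P)}) : c ⊤ = ⊥ := by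
  have hmem : c ⊤ ∈ LB ({⊤, c ⊤} : Set P) := by
    simp [LB]
  rwa [hcompL] at hmem

theorem stmt_9_general {P : Type*} [PartialOrder P] [BoundedOrder P] (c : P → P)
    (hinv : ∀ x : P, c (c x) = x)
    (hcompL : ∀ x : P, LB {x, c x} = {(⊥ : P)}) :
    ∀ x y : P,
      symdiff c (symdiff c {x} {(⊤ : P)}) {(⊤ : P)} = {x} ∧
      symdiff c {x} {y} = symdiff c {c x} {c y} ∧
      symdiff c {x} {c y} = symdiff c {c x} {y} := by
  have hctop : c ⊤ = ⊥ := compl_top_of_lb_pair hcompL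
  intro x y
  refine ⟨?_, (symdiff_singleton_compl_compl hinv x y).symm, ?_⟩
  · rw [symdiff_singleton_top hctop, symdiff_singleton_top hctop, hinv]
  · rw [← symdiff_singleton_compl_compl hinv x (c y), hinv]

theorem stmt_9 {P : Type*} [PartialOrder P] [BoundedOrder P] (c : P → P)
    (hanti : ∀ x y : P, x ≤ y → c y ≤ c x)
    (hinv : ∀ x : P, c (c x) = x)
    (hcompL : ∀ x : P, LB {x, c x} = {(⊥ : P)})
    (hcompU : ∀ x : P, UB {x, c x} = {(⊤ : P)}) :
    ∀ x y : P,
      symdiff c (symdiff c {x} {(⊤ : P)}) {(⊤ : P)} = {x} ∧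
      symdiff c {x} {y} = symdiff c {c x} {c y} ∧
      symdiff c {x} {c y} = symdiff c {c x} {y} :=
  stmt_9_general c hinv hcompL
end

section
/- Let (P,≤,',0,1) be a Boolean poset satisfying the ACC and the DCC. Then for all x,y ∈ P: x + y = Min(U(Max(L(Min(U({x,y})) ∪ Min(U({x',y'})))))). -/
/-!
Under the ACC and the DCC every element of a set lies below a maximal and above a minimal element
of it, so `Max` may be dropped under `U` and `Min` under `L`. Then `x + y` becomes
`Min U(L(x', y) ∪ L(x, y'))` and the right-hand side becomes `Min U L(U(x, y) ∪ U(x', y'))`.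
The complementation dualises distributivity to `L(U(x, y) ∪ A) = L U(L(x ∪ A) ∪ L(y ∪ A))`.
Applied with `A = U(x', y')` and combined with the absorption law `L(x ∪ U(x', b)) = L(x, b)`
(the cone form of `x ∧ (x' ∨ b) = x ∧ b`, again from distributivity and `L(x, x') = 0`),
it turns `L(U(x, y) ∪ U(x', y'))` into `L U(L(x, y') ∪ L(x', y))`.
-/

section Bounds

variable {P : Type*}

theorem LB_eq_lowerBounds [Preorder P] (A : Set P) : LB A = lowerBounds A := rfl

theorem UB_eq_upperBounds [Preorder P] (A : Set P) : UB A = upperBounds A := rfl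

theorem upperBounds_lowerBounds_upperBounds [Preorder P] (S : Set P) :
    upperBounds (lowerBounds (upperBounds S)) = upperBounds S :=
  (upperBounds_mono_set (subset_lowerBounds_upperBounds S)).antisymm fun _ hz _ hw => hw hz

theorem wellFoundedLT_of_forall_not_strictAnti [Preorder P] (h : ∀ f : ℕ → P, ¬ StrictAnti f) :
    WellFoundedLT P := by
  rw [WellFoundedLT, isWellFounded_iff, RelEmbedding.wellFounded_iff_isEmpty]
  exact ⟨fun f => h f fun _ _ hmn => f.map_rel_iff.2 hmn⟩

theorem wellFoundedGT_of_forall_not_strictMono [Preorder P] (h : ∀ f : ℕ → P, ¬ StrictMono f) :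
    WellFoundedGT P :=
  wellFoundedLT_of_forall_not_strictAnti (P := Pᵒᵈ) h

variable [PartialOrder P]

theorem mem_MaxS_of_maximal {S : Set P} {m : P} (hm : Maximal (· ∈ S) m) : m ∈ MaxS S :=
  ⟨hm.prop, fun _ hy hle => (hm.eq_of_le hy hle).symm⟩

theorem mem_MinS_of_minimal {S : Set P} {m : P} (hm : Minimal (· ∈ S) m) : m ∈ MinS S :=
  ⟨hm.prop, fun _ hy hle => (hm.eq_of_ge hy hle).symm⟩

theorem upperBounds_MaxS [WellFoundedGT P] (S : Set P) : upperBounds (MaxS S) = upperBounds S := by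
  refine Set.Subset.antisymm (fun z hz s hs => ?_) (upperBounds_mono_set fun m hm => hm.1)
  obtain ⟨m, hsm, hm⟩ := exists_maximal_ge_of_wellFoundedGT (· ∈ S) s hs
  exact hsm.trans (hz (mem_MaxS_of_maximal hm))

theorem lowerBounds_MinS [WellFoundedLT P] (S : Set P) : lowerBounds (MinS S) = lowerBounds S := by
  refine Set.Subset.antisymm (fun z hz s hs => ?_) (lowerBounds_mono_set fun m hm => hm.1)
  obtain ⟨m, hms, hm⟩ := exists_minimal_le_of_wellFoundedLT (· ∈ S) s hs
  exact (hz (mem_MinS_of_minimal hm)).trans hms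

end Bounds

def ConeDistributive (P : Type*) [Preorder P] : Prop :=
  ∀ (x y : P) (A : Set P), upperBounds (lowerBounds {x, y} ∪ A) =
    upperBounds (lowerBounds (upperBounds ({x} ∪ A) ∪ upperBounds ({y} ∪ A)))

section Complement

variable {P : Type*} [Preorder P] {c : P → P}

theorem le_apply_comm_of_antitone_of_involutive (hanti : Antitone c) (hinv : Function.Involutive c)
    {a b : P} : a ≤ c b ↔ b ≤ c a :=
  ⟨fun h => hinv b ▸ hanti h, fun h => hinv a ▸ hanti h⟩

theorem image_upperBounds_of_antitone_of_involutive (hanti : Antitone c)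
    (hinv : Function.Involutive c) (A : Set P) : c '' upperBounds A = lowerBounds (c '' A) := by
  ext z
  rw [Set.mem_image_iff_of_inverse hinv.leftInverse hinv.rightInverse, mem_upperBounds,
    mem_lowerBounds, Set.forall_mem_image]
  exact forall₂_congr fun _ _ => le_apply_comm_of_antitone_of_involutive hanti hinv

theorem image_lowerBounds_of_antitone_of_involutive (hanti : Antitone c)
    (hinv : Function.Involutive c) (A : Set P) : c '' lowerBounds A = upperBounds (c '' A) := by
  have h := image_upperBounds_of_antitone_of_involutive hanti hinv (c '' A)
  rw [← Set.image_comp, hinv.comp_self, Set.image_id] at h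
  rw [← h, ← Set.image_comp, hinv.comp_self, Set.image_id]

theorem ConeDistributive.lowerBounds_upperBounds_pair_union (hD : ConeDistributive P)
    (hanti : Antitone c) (hinv : Function.Involutive c) (x y : P) (A : Set P) :
    lowerBounds (upperBounds {x, y} ∪ A) =
      lowerBounds (upperBounds (lowerBounds ({x} ∪ A) ∪ lowerBounds ({y} ∪ A))) := by
  have h := congrArg (c '' ·) (hD (c x) (c y) (c '' A))
  simpa only [image_upperBounds_of_antitone_of_involutive hanti hinv,
    image_lowerBounds_of_antitone_of_involutive hanti hinv, Set.image_union, Set.image_singleton,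
    Set.image_pair, Set.image_image, hinv _, Set.image_id'] using h

theorem lowerBounds_singleton_union_upperBounds_compl_pair [OrderBot P]
    (hD : ConeDistributive P) (hanti : Antitone c) (hinv : Function.Involutive c) {x : P}
    (hx : lowerBounds {x, c x} = {⊥}) (b : P) :
    lowerBounds ({x} ∪ upperBounds {c x, b}) = lowerBounds {x, b} := by
  refine Set.Subset.antisymm (fun z hz => ?_) (fun z hz => ?_)
  · have hzx : z ≤ x := hz (Or.inl rfl)
    have hzL : z ∈ lowerBounds (upperBounds {c x, b} ∪ {z}) := by
      rw [lowerBounds_union]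
      exact ⟨fun u hu => hz (Or.inr hu), fun w hw => hw ▸ le_rfl⟩
    rw [hD.lowerBounds_upperBounds_pair_union hanti hinv] at hzL
    -- `L(c x, z) ⊆ L(c x, x) = {⊥}` as `z ≤ x`, so `b` is an upper bound of both cones
    have hb : b ∈ upperBounds (lowerBounds ({c x} ∪ {z}) ∪ lowerBounds ({b} ∪ {z})) := by
      rintro w (hw | hw)
      · have hw' : w ∈ lowerBounds {x, c x} := by
          simp only [lowerBounds_insert, lowerBounds_singleton, Set.mem_inter_iff, Set.mem_Iic]
          exact ⟨(hw (Or.inr rfl)).trans hzx, hw (Or.inl rfl)⟩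
        rw [hx] at hw'
        exact hw' ▸ bot_le
      · exact hw (Or.inl rfl)
    simp only [lowerBounds_insert, lowerBounds_singleton, Set.mem_inter_iff, Set.mem_Iic]
    exact ⟨hzx, hzL hb⟩
  · simp only [lowerBounds_insert, lowerBounds_singleton, Set.mem_inter_iff, Set.mem_Iic] at hz
    rw [Set.singleton_union, lowerBounds_insert]
    exact ⟨hz.1, fun u hu => hz.2.trans (hu (Or.inr rfl))⟩

theorem lowerBounds_upperBounds_pair_union_upperBounds_compl_pair [OrderBot P]
    (hD : ConeDistributive P) (hanti : Antitone c) (hinv : Function.Involutive c)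
    (hcomp : ∀ x, lowerBounds {x, c x} = {⊥}) (x y : P) :
    lowerBounds (upperBounds {x, y} ∪ upperBounds {c x, c y}) =
      lowerBounds (upperBounds (lowerBounds {x, c y} ∪ lowerBounds {y, c x})) := by
  rw [hD.lowerBounds_upperBounds_pair_union hanti hinv,
    lowerBounds_singleton_union_upperBounds_compl_pair hD hanti hinv (hcomp x),
    Set.pair_comm (c x), lowerBounds_singleton_union_upperBounds_compl_pair hD hanti hinv (hcomp y)]

end Complement

theorem stmt_10_general {P : Type*} [PartialOrder P] [BoundedOrder P] (c : P → P)
    (hanti : ∀ x y : P, x ≤ y → c y ≤ c x)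
    (hinv : ∀ x : P, c (c x) = x)
    (hcompL : ∀ x : P, LB {x, c x} = {(⊥ : P)})
    (hACC : ∀ f : ℕ → P, ¬ StrictMono f)
    (hDCC : ∀ f : ℕ → P, ¬ StrictAnti f)
    (hdist : ∀ (x y : P) (A : Set P),
      UB (LB {x, y} ∪ A) = UB (LB (UB ({x} ∪ A) ∪ UB ({y} ∪ A)))) :
    ∀ x y : P,
      symdiff c {x} {y} =
        MinS (UB (MaxS (LB (MinS (UB {x, y}) ∪ MinS (UB {c x, c y}))))) := by
  intro x y
  have := wellFoundedGT_of_forall_not_strictMono hACC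
  have := wellFoundedLT_of_forall_not_strictAnti hDCC
  simp only [symdiff, UB_eq_upperBounds, LB_eq_lowerBounds, Set.image_singleton,
    Set.singleton_union, upperBounds_union, lowerBounds_union, upperBounds_MaxS, lowerBounds_MinS]
  rw [← upperBounds_union, ← lowerBounds_union,
    lowerBounds_upperBounds_pair_union_upperBounds_compl_pair hdist hanti hinv hcompL,
    upperBounds_lowerBounds_upperBounds, Set.union_comm, Set.pair_comm (c x) y]

theorem stmt_10 {P : Type*} [PartialOrder P] [BoundedOrder P] (c : P → P)
    (hanti : ∀ x y : P, x ≤ y → c y ≤ c x)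
    (hinv : ∀ x : P, c (c x) = x)
    (hcompL : ∀ x : P, LB {x, c x} = {(⊥ : P)})
    (hcompU : ∀ x : P, UB {x, c x} = {(⊤ : P)})
    (hACC : ∀ f : ℕ → P, ¬ StrictMono f)
    (hDCC : ∀ f : ℕ → P, ¬ StrictAnti f)
    (hdist : ∀ (x y : P) (A : Set P),
      UB (LB {x, y} ∪ A) = UB (LB (UB ({x} ∪ A) ∪ UB ({y} ∪ A)))) :
    ∀ x y : P,
      symdiff c {x} {y} =
        MinS (UB (MaxS (LB (MinS (UB {x, y}) ∪ MinS (UB {c x, c y}))))) :=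
  stmt_10_general c hanti hinv hcompL hACC hDCC hdist
end
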